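/- Let q* > 1 and F(p) = h_{q*}^{-1}(h_{q*}(p) + p) − p with h_{q*}(p) = p + |p|^{q*−1}·sgn(p). If 1 < q* ≤ 3, then 0 ≤ F'(p) ≤ 1 for all p ≠ 0; consequently, for all p₁, p₂ ∈ ℝ, ((p₁ − F(p₁)) − (p₂ − F(p₂)))·(F(p₁) − F(p₂)) ≥ 0. -/

import Mathlib

/-!
Put `r = q* - 1 ∈ (0, 2]` and `g = h⁻¹ ∘ (h + id)`, so that `F = g - id`. The map `h` is an
increasing bijection of `ℝ` with `h' = 1 + r |p| ^ (r - 1) > 0` off `0`, so by the inverse function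
theorem `g'(p) = (2 + r a ^ (r - 1)) / (1 + r b ^ (r - 1))` with `a = |p|`, `b = |g p|`. As `g` is
odd, `b = g a`, whence `a < b ≤ 2 a` and `b + b ^ r = 2 a + a ^ r`. Then `F' ≤ 1` amounts to
`a ^ (r - 1) ≤ 2 b ^ (r - 1)`, and `F' ≥ 0` to `r (b ^ (r - 1) - a ^ (r - 1)) ≤ 1`, which for
`1 < r ≤ 2` follows from the tangent line bounds of the convex `x ^ r` and the concave
`x ^ (r - 1)` at `a`. So the continuous maps `F` and `id - F` are both monotone, and the product of
their increments is nonnegative.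
-/

open Real Filter Function Set

theorem monotone_of_hasDerivAt_nonneg_of_ne {f f' : ℝ → ℝ} {a : ℝ} (hf : Continuous f)
    (hderiv : ∀ x ≠ a, HasDerivAt f (f' x) x) (hnonneg : ∀ x ≠ a, 0 ≤ f' x) : Monotone f := by
  have hhalf : ∀ D : Set ℝ, Convex ℝ D → interior D ⊆ {a}ᶜ → MonotoneOn f D :=
    fun D hD hint => monotoneOn_of_hasDerivWithinAt_nonneg hD hf.continuousOn
      (fun x hx => (hderiv x (hint hx)).hasDerivWithinAt) (fun x hx => hnonneg x (hint hx))
  exact MonotoneOn.Iic_union_Ici (hhalf _ (convex_Iic a) (by simp))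
    (hhalf _ (convex_Ici a) (by simp))

noncomputable def signedRpow (r p : ℝ) : ℝ := |p| ^ r * Real.sign p

section signedRpow
variable {r p : ℝ}

@[simp] theorem signedRpow_zero : signedRpow r 0 = 0 := by simp [signedRpow]

theorem signedRpow_neg (p : ℝ) : signedRpow r (-p) = -signedRpow r p := by
  simp [signedRpow, Real.sign_neg]

theorem signedRpow_of_pos (hp : 0 < p) : signedRpow r p = p ^ r := by
  rw [signedRpow, Real.sign_of_pos hp, abs_of_pos hp, mul_one]

theorem monotone_signedRpow (hr : 0 ≤ r) : Monotone (signedRpow r) := by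
  have hIci : MonotoneOn (signedRpow r) (Ici 0) := by
    intro x hx y hy hxy
    rcases (mem_Ici.1 hx).eq_or_lt with rfl | hx
    · rcases (mem_Ici.1 hy).eq_or_lt with rfl | hy
      · rfl
      · simpa [signedRpow_of_pos hy] using rpow_nonneg hy.le r
    · rw [signedRpow_of_pos hx, signedRpow_of_pos (hx.trans_le hxy)]
      exact rpow_le_rpow hx.le hxy hr
  refine MonotoneOn.Iic_union_Ici (fun x hx y hy hxy => ?_) hIci
  simpa [signedRpow_neg] using
    hIci (mem_Ici.2 (neg_nonneg.2 hy)) (mem_Ici.2 (neg_nonneg.2 hx)) (neg_le_neg hxy)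

theorem signedRpow_inv_signedRpow (hr : r ≠ 0) (p : ℝ) : signedRpow r⁻¹ (signedRpow r p) = p := by
  have hpos : ∀ p : ℝ, 0 < p → signedRpow r⁻¹ (signedRpow r p) = p := fun p hp => by
    rw [signedRpow_of_pos hp, signedRpow_of_pos (rpow_pos_of_pos hp r), rpow_rpow_inv hp.le hr]
  rcases lt_trichotomy p 0 with hp | rfl | hp
  · simpa [signedRpow_neg] using hpos (-p) (neg_pos.2 hp)
  · simp
  · exact hpos p hp

theorem continuous_signedRpow (hr : 0 < r) : Continuous (signedRpow r) :=
  (monotone_signedRpow hr.le).continuous_of_surjective fun p =>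
    ⟨signedRpow r⁻¹ p, by simpa using signedRpow_inv_signedRpow (inv_ne_zero hr.ne') p⟩

theorem hasDerivAt_signedRpow (hp : p ≠ 0) :
    HasDerivAt (signedRpow r) (r * |p| ^ (r - 1)) p := by
  have hpos : ∀ p : ℝ, 0 < p → HasDerivAt (signedRpow r) (r * |p| ^ (r - 1)) p := fun p hp => by
    rw [abs_of_pos hp]
    exact (hasDerivAt_rpow_const (Or.inl hp.ne')).congr_of_eventuallyEq <|
      (eventually_gt_nhds hp).mono fun x hx => signedRpow_of_pos hx
  rcases hp.lt_or_gt with hp | hp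
  · have hodd : (fun x => -signedRpow r (-x)) =ᶠ[nhds p] signedRpow r :=
      Eventually.of_forall fun x => by simp [signedRpow_neg]
    simpa using (((hpos (-p) (neg_pos.2 hp)).comp p (hasDerivAt_neg p)).neg).congr_of_eventuallyEq
      hodd.symm
  · exact hpos p hp

end signedRpow

section
variable {a b s : ℝ}

theorem mul_rpow_sub_one_mul_sub_le_rpow_sub_rpow (ha : 0 < a) (hb : 0 ≤ b) (hs : 1 ≤ s) :
    s * a ^ (s - 1) * (b - a) ≤ b ^ s - a ^ s := by
  have bernoulli := one_add_mul_self_le_rpow_one_add (s := b / a - 1) (by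
    have := div_nonneg hb ha.le; linarith) hs
  rw [add_sub_cancel, div_rpow hb ha.le, le_div_iff₀ (rpow_pos_of_pos ha s)] at bernoulli
  have : (1 + s * (b / a - 1)) * a ^ s = a ^ s + s * a ^ (s - 1) * (b - a) := by
    rw [rpow_sub_one ha.ne']; field_simp
  linarith

theorem rpow_sub_rpow_le_mul_rpow_sub_one_mul_sub (ha : 0 < a) (hb : 0 ≤ b) (hs0 : 0 ≤ s)
    (hs1 : s ≤ 1) : b ^ s - a ^ s ≤ s * a ^ (s - 1) * (b - a) := by
  have bernoulli := rpow_one_add_le_one_add_mul_self (s := b / a - 1) (by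
    have := div_nonneg hb ha.le; linarith) hs0 hs1
  rw [add_sub_cancel, div_rpow hb ha.le, div_le_iff₀ (rpow_pos_of_pos ha s)] at bernoulli
  have : (1 + s * (b / a - 1)) * a ^ s = a ^ s + s * a ^ (s - 1) * (b - a) := by
    rw [rpow_sub_one ha.ne']; field_simp
  linarith

theorem rpow_le_two_mul_rpow (ha : 0 < a) (hab : a ≤ b) (hb : b ≤ 2 * a) (hs : -1 ≤ s) :
    a ^ s ≤ 2 * b ^ s := by
  rcases le_total 0 s with hs0 | hs0
  · have := rpow_le_rpow ha.le hab hs0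
    linarith [rpow_nonneg (ha.le.trans hab) s]
  · have h2 : (2 : ℝ)⁻¹ ≤ 2 ^ s := by
      rw [← rpow_neg_one]; exact rpow_le_rpow_of_exponent_le (by norm_num) hs
    calc a ^ s = 2 * (2⁻¹ * a ^ s) := by ring
      _ ≤ 2 * (2 ^ s * a ^ s) := by gcongr
      _ = 2 * (2 * a) ^ s := by rw [mul_rpow (by norm_num) ha.le]
      _ ≤ 2 * b ^ s := by gcongr 2 * ?_; exact rpow_le_rpow_of_nonpos (ha.trans_le hab) hb hs0
end

theorem mul_rpow_sub_one_sub_rpow_sub_one_le_one {a b r : ℝ} (hr0 : 0 < r) (hr2 : r ≤ 2)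
    (ha : 0 < a) (hab : a < b) (heq : b + b ^ r = 2 * a + a ^ r) :
    r * (b ^ (r - 1) - a ^ (r - 1)) ≤ 1 := by
  rcases le_total r 1 with hr1 | hr1
  · have := rpow_le_rpow_of_nonpos ha hab.le (by linarith : r - 1 ≤ 0)
    nlinarith
  have hconvex := mul_rpow_sub_one_mul_sub_le_rpow_sub_rpow ha (ha.trans hab).le hr1
  have hconcave := rpow_sub_rpow_le_mul_rpow_sub_one_mul_sub ha (ha.trans hab).le
    (by linarith : 0 ≤ r - 1) (by linarith)
  rw [rpow_sub_one ha.ne' (r - 1)] at hconcave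
  have hscaled : r * (b ^ (r - 1) - a ^ (r - 1)) * a ≤ (r - 1) * (r * a ^ (r - 1) * (b - a)) :=
    calc r * (b ^ (r - 1) - a ^ (r - 1)) * a
        ≤ r * a * ((r - 1) * (a ^ (r - 1) / a) * (b - a)) := by
          rw [mul_right_comm]; exact mul_le_mul_of_nonneg_left hconcave (by positivity)
      _ = (r - 1) * (r * a ^ (r - 1) * (b - a)) := by field_simp
  -- `(r - 1) (r a ^ (r - 1) (b - a)) ≤ (r - 1) (b ^ r - a ^ r) = (r - 1) (2 a - b) ≤ a`
  have : r * (b ^ (r - 1) - a ^ (r - 1)) * a ≤ 1 * a := by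
    nlinarith
  exact le_of_mul_le_mul_right this ha

namespace RpowShift

noncomputable def h (r p : ℝ) : ℝ := p + signedRpow r p

noncomputable def g (r p : ℝ) : ℝ := invFun (h r) (h r p + p)

noncomputable def F (r p : ℝ) : ℝ := g r p - p

variable {r p : ℝ}

theorem h_neg (p : ℝ) : h r (-p) = -h r p := by
  rw [h, h, signedRpow_neg, neg_add]

theorem h_strictMono (hr : 0 ≤ r) : StrictMono (h r) :=
  strictMono_id.add_monotone (monotone_signedRpow hr)

theorem continuous_h (hr : 0 < r) : Continuous (h r) :=
  continuous_id.add (continuous_signedRpow hr)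

theorem hasDerivAt_h (hp : p ≠ 0) : HasDerivAt (h r) (1 + r * |p| ^ (r - 1)) p :=
  (hasDerivAt_id p).add (hasDerivAt_signedRpow hp)

theorem h_surjective (hr : 0 < r) : Surjective (h r) := by
  refine (continuous_h hr).surjective (tendsto_atTop_mono' _ ?_ tendsto_id)
    (tendsto_atBot_mono' _ ?_ tendsto_id)
  · filter_upwards [eventually_ge_atTop 0] with p hp
    simpa [h] using monotone_signedRpow hr.le hp
  · filter_upwards [eventually_le_atBot 0] with p hp
    simpa [h] using monotone_signedRpow hr.le hp

theorem h_invFun (hr : 0 < r) (y : ℝ) : h r (invFun (h r) y) = y :=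
  invFun_eq (h_surjective hr y)

theorem continuous_invFun_h (hr : 0 < r) : Continuous (invFun (h r)) :=
  Monotone.continuous_of_surjective
    (fun x y hxy => (h_strictMono hr.le).le_iff_le.1 (by rwa [h_invFun hr, h_invFun hr]))
    (fun x => ⟨h r x, leftInverse_invFun (h_strictMono hr.le).injective x⟩)

theorem h_g (hr : 0 < r) (p : ℝ) : h r (g r p) = h r p + p :=
  h_invFun hr _

theorem continuous_g (hr : 0 < r) : Continuous (g r) :=
  (continuous_invFun_h hr).comp ((continuous_h hr).add continuous_id)

theorem g_strictMono (hr : 0 < r) : StrictMono (g r) := fun x y hxy =>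
  (h_strictMono hr.le).lt_iff_lt.1 <| by
    rw [h_g hr, h_g hr]; linarith [h_strictMono hr.le hxy]

theorem g_zero (hr : 0 < r) : g r 0 = 0 :=
  (h_strictMono hr.le).injective <| by rw [h_g hr, add_zero]

theorem g_neg (hr : 0 < r) (p : ℝ) : g r (-p) = -g r p :=
  (h_strictMono hr.le).injective <| by rw [h_g hr, h_neg, h_neg, h_g hr, neg_add]

theorem abs_g (hr : 0 < r) (p : ℝ) : |g r p| = g r |p| := by
  rcases le_total 0 p with hp | hp
  · have := (g_strictMono hr).monotone hp
    rw [g_zero hr] at this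
    rw [abs_of_nonneg hp, abs_of_nonneg this]
  · have := (g_strictMono hr).monotone hp
    rw [g_zero hr] at this
    rw [abs_of_nonpos hp, abs_of_nonpos this, g_neg hr]

theorem lt_g (hr : 0 < r) (hp : 0 < p) : p < g r p :=
  (h_strictMono hr.le).lt_iff_lt.1 <| by rw [h_g hr]; linarith

theorem g_le_two_mul (hr : 0 < r) (hp : 0 ≤ p) : g r p ≤ 2 * p :=
  (h_strictMono hr.le).le_iff_le.1 <| by
    rw [h_g hr, h, h]; linarith [monotone_signedRpow hr.le (by linarith : p ≤ 2 * p)]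

theorem g_add_g_rpow (hr : 0 < r) (hp : 0 < p) : g r p + g r p ^ r = 2 * p + p ^ r := by
  have := h_g hr p
  rw [h, h, signedRpow_of_pos hp, signedRpow_of_pos (hp.trans (lt_g hr hp))] at this
  linarith

theorem hasDerivAt_g (hr : 0 < r) (hp : p ≠ 0) :
    HasDerivAt (g r) ((2 + r * |p| ^ (r - 1)) / (1 + r * |g r p| ^ (r - 1))) p := by
  have hgp : g r p ≠ 0 := by
    rw [← g_zero hr]; exact (g_strictMono hr).injective.ne hp
  have hinv : HasDerivAt (invFun (h r)) (1 + r * |g r p| ^ (r - 1))⁻¹ (h r p + p) :=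
    HasDerivAt.of_local_left_inverse (continuous_invFun_h hr).continuousAt (hasDerivAt_h hgp)
      (by positivity) (Eventually.of_forall (h_invFun hr))
  rw [div_eq_inv_mul, show 2 + r * |p| ^ (r - 1) = 1 + r * |p| ^ (r - 1) + 1 by ring]
  exact hinv.comp (h := fun x => h r x + x) p ((hasDerivAt_h hp).add (hasDerivAt_id' p))

theorem hasDerivAt_F (hr : 0 < r) (hp : p ≠ 0) :
    HasDerivAt (F r) ((2 + r * |p| ^ (r - 1)) / (1 + r * |g r p| ^ (r - 1)) - 1) p :=
  (hasDerivAt_g hr hp).sub (hasDerivAt_id p)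

theorem deriv_F_mem_Icc (hr0 : 0 < r) (hr2 : r ≤ 2) (hp : p ≠ 0) : deriv (F r) p ∈ Icc 0 1 := by
  rw [(hasDerivAt_F hr0 hp).deriv, abs_g hr0]
  have ha : 0 < |p| := abs_pos.2 hp
  have hab := lt_g hr0 ha
  have hslope := mul_rpow_sub_one_sub_rpow_sub_one_le_one hr0 hr2 ha hab
    (g_add_g_rpow hr0 ha)
  have hratio := rpow_le_two_mul_rpow ha hab.le (g_le_two_mul hr0 ha.le)
    (by linarith : -1 ≤ r - 1)
  have hden : 0 < 1 + r * g r |p| ^ (r - 1) := by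
    have := rpow_nonneg (ha.trans hab).le (r - 1); positivity
  constructor
  · rw [sub_nonneg, le_div_iff₀ hden]; linarith
  · rw [sub_le_iff_le_add, div_le_iff₀ hden]; nlinarith

theorem monotone_F (hr0 : 0 < r) (hr2 : r ≤ 2) : Monotone (F r) :=
  monotone_of_hasDerivAt_nonneg_of_ne ((continuous_g hr0).sub continuous_id)
    (fun _ hx => (hasDerivAt_F hr0 hx).differentiableAt.hasDerivAt)
    (fun _ hx => (deriv_F_mem_Icc hr0 hr2 hx).1)

theorem monotone_id_sub_F (hr0 : 0 < r) (hr2 : r ≤ 2) : Monotone fun p => p - F r p :=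
  monotone_of_hasDerivAt_nonneg_of_ne (continuous_id.sub ((continuous_g hr0).sub continuous_id))
    (fun x hx => (hasDerivAt_id x).sub (hasDerivAt_F hr0 hx).differentiableAt.hasDerivAt)
    (fun _ hx => sub_nonneg.2 (deriv_F_mem_Icc hr0 hr2 hx).2)

end RpowShift

/-- For `1 < q* ≤ 3` and `F p = h_{q*}⁻¹(h_{q*}(p) + p) - p` with
`h_{q*}(p) = p + |p|^{q*-1} sgn p`: `0 ≤ F'(p) ≤ 1` for all `p ≠ 0`, and
consequently `((p₁ - F p₁) - (p₂ - F p₂)) (F p₁ - F p₂) ≥ 0` for all `p₁ p₂`. -/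
theorem stmt_17 (qs : ℝ) (hqs1 : 1 < qs) (hqs3 : qs ≤ 3) :
    letI h := fun p : ℝ => p + |p| ^ (qs - 1) * Real.sign p
    letI F := fun p : ℝ => Function.invFun h (h p + p) - p
    (∀ p : ℝ, p ≠ 0 → 0 ≤ deriv F p ∧ deriv F p ≤ 1) ∧
    ∀ p₁ p₂ : ℝ, 0 ≤ ((p₁ - F p₁) - (p₂ - F p₂)) * (F p₁ - F p₂) := by
  have hr0 : 0 < qs - 1 := by linarith
  have hr2 : qs - 1 ≤ 2 := by linarith
  exact ⟨fun p hp => RpowShift.deriv_F_mem_Icc hr0 hr2 hp, fun p₁ p₂ =>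
    ((RpowShift.monotone_id_sub_F hr0 hr2).monovary
      (RpowShift.monotone_F hr0 hr2)).sub_mul_sub_nonneg p₂ p₁⟩
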